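/- arXiv:2512.02218 — 6 statements merged into one kernel-verified Lean document; each statement's English description precedes it below -/
import Mathlib

section
/- Let B̃ be an m×n extended exchange matrix with top n×n block B, let λ̃ ∈ ℝ^m, and set λ := Proj_n(λ̃) ∈ ℝ^n. Then Proj_n( P^{B̃}_{λ̃} ) ⊆ P^B_λ. -/
open Matrix

namespace ClusterDom

variable {ι ρ : Type*} [Fintype ι] [DecidableEq ι] [DecidableEq ρ]

/-- Mutation of a rectangular matrix `M` (rows `ρ`, columns `ι`) at column `k`;
`emb k` is the row corresponding to column `k`. -/
def mutB (emb : ι → ρ) (M : Matrix ρ ι ℤ) (k : ι) : Matrix ρ ι ℤ :=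
  Matrix.of fun i j =>
    if i = emb k ∨ j = k then -M i j
    else M i j + (M i k).sign * max (M i k * M (emb k) j) 0

/-- Mutation along a list of column indices, applied left to right. -/
def mutL (emb : ι → ρ) (M : Matrix ρ ι ℤ) (ks : List ι) : Matrix ρ ι ℤ :=
  ks.foldl (mutB emb) M

/-- One-step piecewise linear mutation map. -/
def etaStep (emb : ι → ρ) (M : Matrix ρ ι ℤ) (k : ι) (x : ρ → ℝ) : ρ → ℝ :=
  fun j =>
    if j = emb k then -x (emb k)
    else x j + max ((M j k : ℤ) : ℝ) 0 * max (x (emb k)) 0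
      - max (-((M j k : ℤ) : ℝ)) 0 * max (-x (emb k)) 0

/-- Mutation map along a list of indices (applied left to right). -/
def etaL (emb : ι → ρ) : Matrix ρ ι ℤ → List ι → (ρ → ℝ) → ρ → ℝ
  | _, [], x => x
  | M, k :: ks, x => etaL emb (mutB emb M k) ks (etaStep emb M k x)

/-- `B` stacked over an identity matrix. -/
def stacked (B : Matrix ι ι ℤ) : Matrix (ι ⊕ ι) ι ℤ :=
  Matrix.of fun i j => Sum.elim (fun i' => B i' j) (fun i' => if i' = j then 1 else 0) i

/-- The C-matrix of the seed reached along `ks`. -/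
def cMat (B : Matrix ι ι ℤ) (ks : List ι) : Matrix ι ι ℤ :=
  Matrix.of fun i j => mutL Sum.inl (stacked B) ks (Sum.inr i) j

/-- The g-vector cone of the seed reached along `ks`. -/
def coneOf (B : Matrix ι ι ℤ) (ks : List ι) : Set (ι → ℝ) :=
  {x | ∀ j, 0 ≤ ∑ i, x i * ((cMat (-Bᵀ) ks i j : ℤ) : ℝ)}

/-- The piece of the dominance region associated to the sequence `ks`
(general, possibly extended, version). -/
def domRegSeqE (emb : ι → ρ) (M : Matrix ρ ι ℤ) (lam : ρ → ℝ) (ks : List ι) : Set (ρ → ℝ) :=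
  {x | ∃ α : ι → ℝ, (∀ i, 0 ≤ α i) ∧
    etaL emb M ks x = etaL emb M ks lam + ((mutL emb M ks).map ((↑) : ℤ → ℝ)).mulVec α}

/-- The dominance region (general, possibly extended, version). -/
def domRegE (emb : ι → ρ) (M : Matrix ρ ι ℤ) (lam : ρ → ℝ) : Set (ρ → ℝ) :=
  ⋂ ks : List ι, domRegSeqE emb M lam ks

/-- The piece of the dominance region associated to the sequence `ks` (square case). -/
abbrev domRegSeq (B : Matrix ι ι ℤ) (lam : ι → ℝ) (ks : List ι) : Set (ι → ℝ) :=
  domRegSeqE id B lam ks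

/-- The dominance region (square case). -/
abbrev domReg (B : Matrix ι ι ℤ) (lam : ι → ℝ) : Set (ι → ℝ) :=
  domRegE id B lam

/-- `B` is skew-symmetrizable. -/
def SkewSymmetrizable (B : Matrix ι ι ℤ) : Prop :=
  ∃ d : ι → ℤ, (∀ i, 0 < d i) ∧ ∀ i j, d i * B i j = -(d j * B j i)

/-- `B` is of finite type. -/
def FiniteType (B : Matrix ι ι ℤ) : Prop :=
  ∀ ks : List ι, ∀ i j, |mutL id B ks i j * mutL id B ks j i| ≤ 3

/-- `ks` (in application order) is a green sequence for `B`. -/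
def IsGreen (B : Matrix ι ι ℤ) (ks : List ι) : Prop :=
  ∀ p : Fin ks.length, ∀ i, 0 ≤ cMat B (ks.take p.1) i (ks.get p)

/-- `ks` (in application order) is a maximal green sequence for `B`. -/
def IsMaxGreen (B : Matrix ι ι ℤ) (ks : List ι) : Prop :=
  IsGreen B ks ∧ ∀ i j, cMat B ks i j ≤ 0

/-- The Cartan companion of `B`. -/
def cartan (B : Matrix ι ι ℤ) : Matrix ι ι ℤ :=
  Matrix.of fun i j => if i = j then 2 else -|B i j|

/-- `B` is acyclic. -/
def Acyclic (B : Matrix ι ι ℤ) : Prop :=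
  ∀ i, ¬ Relation.TransGen (fun a b => 0 < B a b) i i

/-- `B` is acyclic of affine type. -/
def AcyclicAffine (B : Matrix ι ι ℤ) : Prop :=
  Acyclic B ∧
  (∀ i j, Relation.ReflTransGen (fun a b => B a b ≠ 0 ∨ B b a ≠ 0) i j) ∧
  (∃ d : ι → ℤ, (∀ i, 0 < d i) ∧ (∀ i j, d i * B i j = -(d j * B j i)) ∧
    ∀ x : ι → ℝ, 0 ≤ ∑ i, ∑ j, x i * ((d i * cartan B i j : ℤ) : ℝ) * x j) ∧
  ((cartan B).map ((↑) : ℤ → ℝ)).rank = Fintype.card ι - 1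

/-- `B` is of affine type. -/
def AffineType (B : Matrix ι ι ℤ) : Prop :=
  ∃ ks : List ι, AcyclicAffine (mutL id B ks)

/-- The top `n × n` block of an `m × n` extended exchange matrix. -/
def topBlock {m n : ℕ} (h : n ≤ m) (M : Matrix (Fin m) (Fin n) ℤ) : Matrix (Fin n) (Fin n) ℤ :=
  Matrix.of fun i j => M (Fin.castLE h i) j

lemma topBlock_mutB {m n : ℕ} (h : n ≤ m) (M : Matrix (Fin m) (Fin n) ℤ) (k : Fin n) :
    topBlock h (mutB (Fin.castLE h) M k) = mutB id (topBlock h M) k := by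
  ext i j
  simp only [topBlock, mutB, Matrix.of_apply, id]
  have : Fin.castLE h i = Fin.castLE h k ↔ i = k :=
    ⟨fun e => Fin.castLE_injective h e, fun e => by rw [e]⟩
  simp only [this]

lemma topBlock_mutL {m n : ℕ} (h : n ≤ m) (M : Matrix (Fin m) (Fin n) ℤ) (ks : List (Fin n)) :
    topBlock h (mutL (Fin.castLE h) M ks) = mutL id (topBlock h M) ks := by
  induction ks generalizing M with
  | nil => rfl
  | cons k ks ih =>
      simp only [mutL, List.foldl_cons] at *
      rw [ih, topBlock_mutB]

lemma proj_etaStep {m n : ℕ} (h : n ≤ m) (M : Matrix (Fin m) (Fin n) ℤ) (k : Fin n)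
    (x : Fin m → ℝ) :
    (fun i : Fin n => etaStep (Fin.castLE h) M k x (Fin.castLE h i)) =
      etaStep id (topBlock h M) k (fun i => x (Fin.castLE h i)) := by
  funext j
  simp only [etaStep, topBlock, Matrix.of_apply, id]
  have : Fin.castLE h j = Fin.castLE h k ↔ j = k :=
    ⟨fun e => Fin.castLE_injective h e, fun e => by rw [e]⟩
  simp only [this]

lemma proj_etaL {m n : ℕ} (h : n ≤ m) (M : Matrix (Fin m) (Fin n) ℤ) (ks : List (Fin n))
    (x : Fin m → ℝ) :
    (fun i : Fin n => etaL (Fin.castLE h) M ks x (Fin.castLE h i)) =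
      etaL id (topBlock h M) ks (fun i => x (Fin.castLE h i)) := by
  induction ks generalizing M x with
  | nil => rfl
  | cons k ks ih =>
      simp only [etaL]
      rw [ih, proj_etaStep, topBlock_mutB]

/-- The projection (forgetting the last `m − n` coordinates) of the
dominance region of `λ̃` with respect to `B̃` is contained in the dominance region of
`Proj_n(λ̃)` with respect to the top block `B`. -/
theorem statement10 {m n : ℕ} (h : n ≤ m) (Bt : Matrix (Fin m) (Fin n) ℤ)
    (hskew : SkewSymmetrizable (topBlock h Bt))
    (lam : Fin m → ℝ) :
    (fun x : Fin m → ℝ => fun i : Fin n => x (Fin.castLE h i)) ''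
        domRegE (Fin.castLE h) Bt lam
      ⊆ domReg (topBlock h Bt) (fun i => lam (Fin.castLE h i)) := by
  rintro _ ⟨x, hx, rfl⟩
  simp only [domRegE, Set.mem_iInter] at hx
  simp only [domReg, domRegE, Set.mem_iInter]
  intro ks
  have hxk := hx ks
  obtain ⟨α, hα, heq⟩ := hxk
  refine ⟨α, hα, ?_⟩
  have := congrArg (fun f : Fin m → ℝ => fun i : Fin n => f (Fin.castLE h i)) heq
  funext j
  have hj := congrFun this j
  rw [congrFun (proj_etaL h Bt ks x) j] at hj
  rw [hj]
  have hproj := congrFun (proj_etaL h Bt ks lam) j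
  simp only [Pi.add_apply] at *
  rw [hproj]
  congr 1
  simp only [Matrix.mulVec, Matrix.map_apply, dotProduct]
  rw [← topBlock_mutL h Bt ks]
  rfl

end ClusterDom
end

section
/- Let B be an n×n exchange matrix, let 𝐤 be a finite sequence of indices in {1,…,n}, and let λ ∈ ℝ^n. Set λ' := η_𝐤^{Bᵀ}(λ) and B' := μ_𝐤(B). Then: (1) for every finite sequence ℓ of indices, η_𝐤^{Bᵀ}( P^B_{λ,ℓ} ) = P^{B'}_{λ', ℓ𝐤⁻¹}, where ℓ𝐤⁻¹ denotes the concatenated sequence in which the mutations of 𝐤⁻¹ are performed first and those of ℓ afterward; and (2) η_𝐤^{Bᵀ}( P^B_λ ) = P^{B'}_{λ'}. -/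
open Matrix

namespace ClusterDom

variable {ι ρ : Type*} [Fintype ι] [DecidableEq ι] [DecidableEq ρ]

section Aux

variable {ι ρ : Type*} [Fintype ι] [DecidableEq ι] [DecidableEq ρ]
variable {emb : ι → ρ}

lemma mutB_mutB (M : Matrix ρ ι ℤ) (k : ι) : mutB emb (mutB emb M k) k = M := by
  ext i j
  by_cases h : i = emb k ∨ j = k
  · simp [mutB, h]
  · have h1 : (mutB emb M k) i k = -(M i k) := by simp [mutB]
    have h2 : (mutB emb M k) (emb k) j = -(M (emb k) j) := by simp [mutB]
    simp only [mutB, Matrix.of_apply, if_neg h, or_true, true_or, if_true,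
      Int.sign_neg, neg_mul_neg]
    ring

lemma mutL_append (M : Matrix ρ ι ℤ) (as bs : List ι) :
    mutL emb M (as ++ bs) = mutL emb (mutL emb M as) bs :=
  List.foldl_append ..

lemma mutL_reverse_inv (M : Matrix ρ ι ℤ) (ks : List ι) :
    mutL emb (mutL emb M ks) ks.reverse = M := by
  induction ks generalizing M with
  | nil => rfl
  | cons k ks ih =>
      have : mutL emb M (k :: ks) = mutL emb (mutB emb M k) ks := rfl
      rw [this, List.reverse_cons, mutL_append, ih]
      show mutB emb (mutB emb M k) k = M
      exact mutB_mutB M k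

lemma etaStep_inv (M : Matrix ρ ι ℤ) (k : ι) (x : ρ → ℝ) :
    etaStep emb (mutB emb M k) k (etaStep emb M k x) = x := by
  ext j
  by_cases hj : j = emb k
  · subst hj; simp [etaStep]
  · have h1 : (mutB emb M k) j k = -(M j k) := by simp [mutB]
    simp only [etaStep, mutB, Matrix.of_apply, if_neg hj, or_true, true_or, if_true,
      eq_self_iff_true, Int.cast_neg, neg_neg]
    ring

lemma etaL_append (M : Matrix ρ ι ℤ) (as bs : List ι) (x : ρ → ℝ) :
    etaL emb M (as ++ bs) x = etaL emb (mutL emb M as) bs (etaL emb M as x) := by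
  induction as generalizing M x with
  | nil => rfl
  | cons a as ih =>
      show etaL emb (mutB emb M a) (as ++ bs) (etaStep emb M a x) = _
      rw [ih]; rfl

lemma etaL_singleton (M : Matrix ρ ι ℤ) (k : ι) (x : ρ → ℝ) :
    etaL emb M [k] x = etaStep emb M k x := rfl

lemma etaL_inv (M : Matrix ρ ι ℤ) (ks : List ι) (x : ρ → ℝ) :
    etaL emb (mutL emb M ks) ks.reverse (etaL emb M ks x) = x := by
  induction ks generalizing M x with
  | nil => rfl
  | cons k ks ih =>
      have hm : mutL emb M (k :: ks) = mutL emb (mutB emb M k) ks := rfl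
      have he : etaL emb M (k :: ks) x = etaL emb (mutB emb M k) ks (etaStep emb M k x) := rfl
      rw [hm, he, List.reverse_cons, etaL_append, mutL_reverse_inv, ih, etaL_singleton,
        etaStep_inv]

lemma etaL_inv' (M : Matrix ρ ι ℤ) (ks : List ι) (y : ρ → ℝ) :
    etaL emb M ks (etaL emb (mutL emb M ks) ks.reverse y) = y := by
  have := etaL_inv (emb := emb) (mutL emb M ks) ks.reverse y
  rwa [mutL_reverse_inv, List.reverse_reverse] at this

lemma mem_key (M : Matrix ρ ι ℤ) (ks ls : List ι) (lam y : ρ → ℝ) :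
    y ∈ domRegSeqE emb (mutL emb M ks) (etaL emb M ks lam) (ks.reverse ++ ls) ↔
      etaL emb (mutL emb M ks) ks.reverse y ∈ domRegSeqE emb M lam ls := by
  unfold domRegSeqE
  simp only [Set.mem_setOf_eq, etaL_append, mutL_append, mutL_reverse_inv, etaL_inv]

lemma image_key (M : Matrix ρ ι ℤ) (ks ls : List ι) (lam : ρ → ℝ) :
    etaL emb M ks '' domRegSeqE emb M lam ls =
      domRegSeqE emb (mutL emb M ks) (etaL emb M ks lam) (ks.reverse ++ ls) := by
  ext y
  constructor
  · rintro ⟨x, hx, rfl⟩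
    rw [mem_key, etaL_inv]; exact hx
  · intro hy
    exact ⟨etaL emb (mutL emb M ks) ks.reverse y, (mem_key M ks ls lam y).1 hy,
      etaL_inv' M ks y⟩

end Aux

/-- The mutation map `η_𝐤^{Bᵀ}` takes `P^B_{λ,ℓ}` to
`P^{μ_𝐤(B)}_{η_𝐤(λ), ℓ𝐤⁻¹}` (the sequence `𝐤⁻¹` performed first), and hence takes the
dominance region `P^B_λ` to `P^{μ_𝐤(B)}_{η_𝐤(λ)}`. -/
theorem statement11 {n : ℕ} (B : Matrix (Fin n) (Fin n) ℤ)
    (hskew : SkewSymmetrizable B)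
    (ks : List (Fin n)) (lam : Fin n → ℝ) :
    (∀ ls : List (Fin n),
      etaL id B ks '' domRegSeq B lam ls =
        domRegSeq (mutL id B ks) (etaL id B ks lam) (ks.reverse ++ ls)) ∧
    etaL id B ks '' domReg B lam = domReg (mutL id B ks) (etaL id B ks lam) := by
  have hbij : Function.Bijective (etaL id B ks) :=
    Function.bijective_iff_has_inverse.2
      ⟨etaL id (mutL id B ks) ks.reverse, fun x => etaL_inv B ks x, fun y => etaL_inv' B ks y⟩
  constructor
  · intro ls
    exact image_key B ks ls lam
  · show etaL id B ks '' ⋂ ls : List (Fin n), domRegSeqE id B lam ls =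
        ⋂ ls : List (Fin n), domRegSeqE id (mutL id B ks) (etaL id B ks lam) ls
    rw [Set.image_iInter hbij]
    apply le_antisymm
    · intro y hy
      simp only [Set.mem_iInter] at hy ⊢
      intro ms
      obtain ⟨x, hx, rfl⟩ := hy (ks ++ ms)
      have h2 := mem_key (emb := id) (mutL id B ks) ks.reverse ms (etaL id B ks lam) x
      simp only [mutL_reverse_inv, List.reverse_reverse, etaL_inv] at h2
      exact h2.1 hx
    · intro y hy
      simp only [Set.mem_iInter] at hy ⊢
      intro ls
      rw [image_key B ks ls lam]
      exact hy (ks.reverse ++ ls)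


end ClusterDom
end

section
/- Suppose the n×n exchange matrix B has a block-diagonal decomposition B = [[B₁, 0], [0, B₂]] with B₁ of size n₁×n₁ and B₂ of size n₂×n₂ (n = n₁ + n₂), and suppose λ ∈ ℝ^n decomposes correspondingly as λ = (λ₁, λ₂) with λ₁ ∈ ℝ^{n₁} and λ₂ ∈ ℝ^{n₂}. Then P^B_λ = P^{B₁}_{λ₁} × P^{B₂}_{λ₂}. -/
set_option linter.unusedSectionVars false
set_option linter.unusedVariables false


open Matrix

namespace ClusterDom

variable {ι ρ : Type*} [Fintype ι] [DecidableEq ι] [DecidableEq ρ]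

section Blocks

variable {ι₁ ι₂ : Type*} [Fintype ι₁] [Fintype ι₂] [DecidableEq ι₁] [DecidableEq ι₂]

/-- Left projection of a mutation sequence. -/
def projL (ks : List (ι₁ ⊕ ι₂)) : List ι₁ := ks.filterMap Sum.getLeft?

/-- Right projection of a mutation sequence. -/
def projR (ks : List (ι₁ ⊕ ι₂)) : List ι₂ := ks.filterMap Sum.getRight?

@[simp] lemma projL_nil : projL (ι₁ := ι₁) (ι₂ := ι₂) [] = [] := rfl
@[simp] lemma projR_nil : projR (ι₁ := ι₁) (ι₂ := ι₂) [] = [] := rfl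
@[simp] lemma projL_cons_inl (k : ι₁) (ks : List (ι₁ ⊕ ι₂)) :
    projL (Sum.inl k :: ks) = k :: projL ks := by simp [projL]
@[simp] lemma projL_cons_inr (k : ι₂) (ks : List (ι₁ ⊕ ι₂)) :
    projL (Sum.inr k :: ks) = projL ks := by simp [projL, List.filterMap_cons]
@[simp] lemma projR_cons_inl (k : ι₁) (ks : List (ι₁ ⊕ ι₂)) :
    projR (Sum.inl k :: ks) = projR ks := by simp [projR, List.filterMap_cons]
@[simp] lemma projR_cons_inr (k : ι₂) (ks : List (ι₁ ⊕ ι₂)) :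
    projR (Sum.inr k :: ks) = k :: projR ks := by simp [projR]

@[simp] lemma projL_map_inl (ks : List ι₁) :
    projL (ι₂ := ι₂) (ks.map Sum.inl) = ks := by
  induction ks with
  | nil => rfl
  | cons k ks ih => simp [ih]

@[simp] lemma projR_map_inl (ks : List ι₁) :
    projR (ι₂ := ι₂) (ks.map Sum.inl) = [] := by
  induction ks with
  | nil => rfl
  | cons k ks ih => simp [ih]

@[simp] lemma projL_map_inr (ks : List ι₂) :
    projL (ι₁ := ι₁) (ks.map Sum.inr) = [] := by
  induction ks with
  | nil => rfl
  | cons k ks ih => simp [ih]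

@[simp] lemma projR_map_inr (ks : List ι₂) :
    projR (ι₁ := ι₁) (ks.map Sum.inr) = ks := by
  induction ks with
  | nil => rfl
  | cons k ks ih => simp [ih]

lemma mutB_fromBlocks_inl (A : Matrix ι₁ ι₁ ℤ) (D : Matrix ι₂ ι₂ ℤ) (k : ι₁) :
    mutB id (fromBlocks A 0 0 D) (Sum.inl k) = fromBlocks (mutB id A k) 0 0 D := by
  ext i j
  cases i <;> cases j <;> simp [mutB, fromBlocks]

lemma mutB_fromBlocks_inr (A : Matrix ι₁ ι₁ ℤ) (D : Matrix ι₂ ι₂ ℤ) (k : ι₂) :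
    mutB id (fromBlocks A 0 0 D) (Sum.inr k) = fromBlocks A 0 0 (mutB id D k) := by
  ext i j
  cases i <;> cases j <;> simp [mutB, fromBlocks]

lemma etaStep_fromBlocks_inl (A : Matrix ι₁ ι₁ ℤ) (D : Matrix ι₂ ι₂ ℤ) (k : ι₁)
    (x : ι₁ ⊕ ι₂ → ℝ) :
    etaStep id (fromBlocks A 0 0 D) (Sum.inl k) x =
      Sum.elim (etaStep id A k (x ∘ Sum.inl)) (x ∘ Sum.inr) := by
  funext j
  cases j <;> simp [etaStep, fromBlocks]

lemma etaStep_fromBlocks_inr (A : Matrix ι₁ ι₁ ℤ) (D : Matrix ι₂ ι₂ ℤ) (k : ι₂)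
    (x : ι₁ ⊕ ι₂ → ℝ) :
    etaStep id (fromBlocks A 0 0 D) (Sum.inr k) x =
      Sum.elim (x ∘ Sum.inl) (etaStep id D k (x ∘ Sum.inr)) := by
  funext j
  cases j <;> simp [etaStep, fromBlocks]

lemma mutL_fromBlocks (A : Matrix ι₁ ι₁ ℤ) (D : Matrix ι₂ ι₂ ℤ) (ks : List (ι₁ ⊕ ι₂)) :
    mutL id (fromBlocks A 0 0 D) ks =
      fromBlocks (mutL id A (projL ks)) 0 0 (mutL id D (projR ks)) := by
  induction ks generalizing A D with
  | nil => rfl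
  | cons k ks ih =>
    cases k with
    | inl k =>
      have h : mutL id (fromBlocks A 0 0 D) (Sum.inl k :: ks)
          = mutL id (mutB id (fromBlocks A 0 0 D) (Sum.inl k)) ks := rfl
      rw [h, mutB_fromBlocks_inl, ih]
      simp [mutL]
    | inr k =>
      have h : mutL id (fromBlocks A 0 0 D) (Sum.inr k :: ks)
          = mutL id (mutB id (fromBlocks A 0 0 D) (Sum.inr k)) ks := rfl
      rw [h, mutB_fromBlocks_inr, ih]
      simp [mutL]

lemma etaL_fromBlocks (A : Matrix ι₁ ι₁ ℤ) (D : Matrix ι₂ ι₂ ℤ) (ks : List (ι₁ ⊕ ι₂))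
    (x : ι₁ ⊕ ι₂ → ℝ) :
    etaL id (fromBlocks A 0 0 D) ks x =
      Sum.elim (etaL id A (projL ks) (x ∘ Sum.inl)) (etaL id D (projR ks) (x ∘ Sum.inr)) := by
  induction ks generalizing A D x with
  | nil =>
    funext j
    cases j <;> simp [etaL]
  | cons k ks ih =>
    cases k with
    | inl k =>
      have h : etaL id (fromBlocks A 0 0 D) (Sum.inl k :: ks) x
          = etaL id (mutB id (fromBlocks A 0 0 D) (Sum.inl k)) ks
              (etaStep id (fromBlocks A 0 0 D) (Sum.inl k) x) := rfl
      rw [h, mutB_fromBlocks_inl, etaStep_fromBlocks_inl, ih]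
      simp [etaL, projL, projR, Sum.elim_comp_inl, Sum.elim_comp_inr, List.filterMap_cons]
    | inr k =>
      have h : etaL id (fromBlocks A 0 0 D) (Sum.inr k :: ks) x
          = etaL id (mutB id (fromBlocks A 0 0 D) (Sum.inr k)) ks
              (etaStep id (fromBlocks A 0 0 D) (Sum.inr k) x) := rfl
      rw [h, mutB_fromBlocks_inr, etaStep_fromBlocks_inr, ih]
      simp [etaL, projL, projR, Sum.elim_comp_inl, Sum.elim_comp_inr, List.filterMap_cons]

lemma sum_elim_add {γ : Type*} [Add γ] (f h : ι₁ → γ) (g k : ι₂ → γ) :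
    Sum.elim f g + Sum.elim h k = Sum.elim (f + h) (g + k) := by
  funext j
  cases j <;> simp

lemma sum_elim_eq_iff {γ : Type*} {f h : ι₁ → γ} {g k : ι₂ → γ} :
    Sum.elim f g = Sum.elim h k ↔ f = h ∧ g = k := by
  constructor
  · intro e
    exact ⟨funext fun i => congrFun e (Sum.inl i), funext fun i => congrFun e (Sum.inr i)⟩
  · rintro ⟨rfl, rfl⟩
    rfl

lemma mulVec_fromBlocks_map (A : Matrix ι₁ ι₁ ℤ) (D : Matrix ι₂ ι₂ ℤ) (α : ι₁ ⊕ ι₂ → ℝ) :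
    ((fromBlocks A 0 0 D).map ((↑) : ℤ → ℝ)).mulVec α =
      Sum.elim ((A.map ((↑) : ℤ → ℝ)).mulVec (α ∘ Sum.inl))
        ((D.map ((↑) : ℤ → ℝ)).mulVec (α ∘ Sum.inr)) := by
  funext j
  cases j <;>
    simp [Matrix.mulVec, dotProduct, Fintype.sum_sum_type, fromBlocks,
      Function.comp]

lemma domRegSeqE_fromBlocks (A : Matrix ι₁ ι₁ ℤ) (D : Matrix ι₂ ι₂ ℤ)
    (lam₁ : ι₁ → ℝ) (lam₂ : ι₂ → ℝ) (ks : List (ι₁ ⊕ ι₂)) (x : ι₁ ⊕ ι₂ → ℝ) :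
    x ∈ domRegSeqE id (fromBlocks A 0 0 D) (Sum.elim lam₁ lam₂) ks ↔
      (x ∘ Sum.inl ∈ domRegSeqE id A lam₁ (projL ks) ∧
        x ∘ Sum.inr ∈ domRegSeqE id D lam₂ (projR ks)) := by
  simp only [domRegSeqE, Set.mem_setOf_eq]
  constructor
  · rintro ⟨α, hα, heq⟩
    rw [etaL_fromBlocks, etaL_fromBlocks, mutL_fromBlocks, mulVec_fromBlocks_map,
      Sum.elim_comp_inl, Sum.elim_comp_inr, sum_elim_add, sum_elim_eq_iff] at heq
    exact ⟨⟨α ∘ Sum.inl, fun i => hα _, heq.1⟩, ⟨α ∘ Sum.inr, fun i => hα _, heq.2⟩⟩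
  · rintro ⟨⟨α₁, hα₁, h1⟩, ⟨α₂, hα₂, h2⟩⟩
    refine ⟨Sum.elim α₁ α₂, fun i => by cases i <;> simp [hα₁, hα₂], ?_⟩
    rw [etaL_fromBlocks, etaL_fromBlocks, mutL_fromBlocks, mulVec_fromBlocks_map,
      Sum.elim_comp_inl, Sum.elim_comp_inr, Sum.elim_comp_inl, Sum.elim_comp_inr,
      sum_elim_add, sum_elim_eq_iff]
    exact ⟨h1, h2⟩

end Blocks

/-- For a block-diagonal exchange matrix, the dominance region is the
product of the dominance regions of the blocks. -/
theorem statement12 {n₁ n₂ : ℕ}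
    (B₁ : Matrix (Fin n₁) (Fin n₁) ℤ) (B₂ : Matrix (Fin n₂) (Fin n₂) ℤ)
    (h₁ : SkewSymmetrizable B₁) (h₂ : SkewSymmetrizable B₂)
    (lam₁ : Fin n₁ → ℝ) (lam₂ : Fin n₂ → ℝ) :
    domReg (Matrix.fromBlocks B₁ 0 0 B₂) (Sum.elim lam₁ lam₂) =
      {x | (fun i => x (Sum.inl i)) ∈ domReg B₁ lam₁ ∧
           (fun i => x (Sum.inr i)) ∈ domReg B₂ lam₂} := by
  ext x
  simp only [domReg, domRegE, Set.mem_iInter, Set.mem_setOf_eq]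
  constructor
  · intro h
    constructor
    · intro ks₁
      have h' := (domRegSeqE_fromBlocks B₁ B₂ lam₁ lam₂ (ks₁.map Sum.inl) x).mp
        (h (ks₁.map Sum.inl))
      rw [projL_map_inl] at h'
      exact h'.1
    · intro ks₂
      have h' := (domRegSeqE_fromBlocks B₁ B₂ lam₁ lam₂ (ks₂.map Sum.inr) x).mp
        (h (ks₂.map Sum.inr))
      rw [projR_map_inr] at h'
      exact h'.2
  · rintro ⟨h1, h2⟩ ks
    exact (domRegSeqE_fromBlocks B₁ B₂ lam₁ lam₂ ks x).mpr ⟨h1 _, h2 _⟩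

end ClusterDom
end

section
/- Let S be a set of vectors in ℝ^n, let k ∈ {1,…,n}, let ε ∈ {+1, −1}, and set S_{k,ε} := { s ∈ S : ε·s_k > 0 }. If λ ∈ ℝ^n satisfies ε·λ_k ≤ 0, then (λ + cone(S)) ∩ { x ∈ ℝ^n : ε·x_k ≥ 0 } = ( (λ + cone(S)) ∩ { x ∈ ℝ^n : x_k = 0 } ) + cone(S_{k,ε}). -/
open Pointwise

namespace ClusterDom

/-- The nonnegative linear span (conical hull) of a set of vectors: all finite nonnegative
linear combinations of its elements. -/
def coneHull {n : ℕ} (S : Set (Fin n → ℝ)) : Set (Fin n → ℝ) :=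
  {x | ∃ (t : Finset (Fin n → ℝ)) (c : (Fin n → ℝ) → ℝ),
    ↑t ⊆ S ∧ (∀ v, 0 ≤ c v) ∧ x = ∑ v ∈ t, c v • v}

lemma mem_coneHull {n : ℕ} {S : Set (Fin n → ℝ)} {t : Finset (Fin n → ℝ)}
    {c : (Fin n → ℝ) → ℝ} (hts : ↑t ⊆ S) (hc : ∀ v, 0 ≤ c v) :
    (∑ v ∈ t, c v • v) ∈ coneHull S := ⟨t, c, hts, hc, rfl⟩

lemma coneHull_mono {n : ℕ} {S T : Set (Fin n → ℝ)} (h : S ⊆ T) :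
    coneHull S ⊆ coneHull T := by
  rintro x ⟨t, c, hts, hc, rfl⟩
  exact ⟨t, c, hts.trans h, hc, rfl⟩

lemma smul_mem_coneHull {n : ℕ} {S : Set (Fin n → ℝ)} {a : ℝ} (ha : 0 ≤ a)
    {x : Fin n → ℝ} (hx : x ∈ coneHull S) : a • x ∈ coneHull S := by
  obtain ⟨t, c, hts, hc, rfl⟩ := hx
  refine ⟨t, fun v => a * c v, hts, fun v => mul_nonneg ha (hc v), ?_⟩
  rw [Finset.smul_sum]
  exact Finset.sum_congr rfl fun v _ => (smul_smul a (c v) v)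

lemma add_mem_coneHull {n : ℕ} {S : Set (Fin n → ℝ)} {x y : Fin n → ℝ}
    (hx : x ∈ coneHull S) (hy : y ∈ coneHull S) : x + y ∈ coneHull S := by
  obtain ⟨t₁, c₁, h₁, hc₁, rfl⟩ := hx
  obtain ⟨t₂, c₂, h₂, hc₂, rfl⟩ := hy
  refine ⟨t₁ ∪ t₂,
    fun v => (if v ∈ t₁ then c₁ v else 0) + (if v ∈ t₂ then c₂ v else 0), ?_, ?_, ?_⟩
  · intro v hv
    rcases Finset.mem_union.1 hv with h | h
    · exact h₁ h
    · exact h₂ h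
  · intro v
    apply add_nonneg <;> split <;> first | exact hc₁ _ | exact hc₂ _ | exact le_refl 0
  · have e1 : ∀ (s : Finset (Fin n → ℝ)) (c : (Fin n → ℝ) → ℝ), s ⊆ t₁ ∪ t₂ →
        ∑ v ∈ t₁ ∪ t₂, (if v ∈ s then c v else 0) • v = ∑ v ∈ s, c v • v := by
      intro s c hs
      rw [← Finset.sum_subset hs (fun v _ hv => by simp [hv])]
      exact Finset.sum_congr rfl fun v hv => by simp [hv]
    calc (∑ v ∈ t₁, c₁ v • v) + ∑ v ∈ t₂, c₂ v • v
        = ∑ v ∈ t₁ ∪ t₂, ((if v ∈ t₁ then c₁ v else 0) • v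
            + (if v ∈ t₂ then c₂ v else 0) • v) := by
          rw [Finset.sum_add_distrib, e1 t₁ c₁ Finset.subset_union_left,
            e1 t₂ c₂ Finset.subset_union_right]
      _ = _ := by
          exact Finset.sum_congr rfl fun v _ => (add_smul _ _ v).symm

lemma coneHull_k_nonneg {n : ℕ} {S : Set (Fin n → ℝ)} {k : Fin n} {ε : ℝ}
    {w : Fin n → ℝ} (hw : w ∈ coneHull {s | s ∈ S ∧ 0 < ε * s k}) : 0 ≤ ε * w k := by
  obtain ⟨t, c, hts, hc, rfl⟩ := hw
  have : ε * (∑ v ∈ t, c v • v) k = ∑ v ∈ t, c v * (ε * v k) := by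
    rw [Finset.sum_apply, Finset.mul_sum]
    exact Finset.sum_congr rfl fun v _ => by simp [smul_eq_mul]; ring
  rw [this]
  exact Finset.sum_nonneg fun v hv => mul_nonneg (hc v) (hts hv).2.le

/-- If `ε·λ_k ≤ 0`, then
`(λ + cone(S)) ∩ {x : ε·x_k ≥ 0} = ((λ + cone(S)) ∩ {x : x_k = 0}) + cone(S_{k,ε})`,
where `S_{k,ε}` is the set of elements of `S` whose `k`-th entry strictly agrees in sign
with `ε`. -/
theorem statement16 {n : ℕ} (S : Set (Fin n → ℝ)) (k : Fin n) (ε : ℝ)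
    (hε : ε = 1 ∨ ε = -1) (lam : Fin n → ℝ) (hlam : ε * lam k ≤ 0) :
    ((fun y => lam + y) '' coneHull S) ∩ {x | 0 ≤ ε * x k} =
      (((fun y => lam + y) '' coneHull S) ∩ {x | x k = 0}) +
        coneHull {s | s ∈ S ∧ 0 < ε * s k} := by
  have hεne : ε ≠ 0 := by rcases hε with h | h <;> rw [h] <;> norm_num
  apply Set.Subset.antisymm
  · rintro x ⟨⟨y, ⟨t, c, hts, hc, rfl⟩, rfl⟩, hxk⟩
    set P := t.filter (fun v => 0 < ε * v k) with hP
    set N := t.filter (fun v => ¬ 0 < ε * v k) with hN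
    set u : Fin n → ℝ := ∑ v ∈ N, c v • v with hu
    set w : Fin n → ℝ := ∑ v ∈ P, c v • v with hw
    have hsplit : w + u = ∑ v ∈ t, c v • v := Finset.sum_filter_add_sum_filter_not t _ _
    have hsumk : ∀ (s : Finset (Fin n → ℝ)),
        ε * (∑ v ∈ s, c v • v) k = ∑ v ∈ s, c v * (ε * v k) := by
      intro s
      rw [Finset.sum_apply, Finset.mul_sum]
      exact Finset.sum_congr rfl fun v _ => by simp [smul_eq_mul]; ring
    have hb : 0 ≤ ε * w k := by
      rw [hw, hsumk]
      exact Finset.sum_nonneg fun v hv =>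
        mul_nonneg (hc v) (Finset.mem_filter.1 hv).2.le
    have hun : ε * u k ≤ 0 := by
      rw [hu, hsumk]
      exact Finset.sum_nonpos fun v hv =>
        mul_nonpos_of_nonneg_of_nonpos (hc v) (le_of_not_gt (Finset.mem_filter.1 hv).2)
    set a : ℝ := -(ε * (lam k + u k)) with haa
    set b : ℝ := ε * w k with hbb
    have ha : 0 ≤ a := by
      rw [haa]
      nlinarith
    have hab : a ≤ b := by
      have : 0 ≤ ε * (lam + ∑ v ∈ t, c v • v) k := hxk
      rw [← hsplit] at this
      simp only [Pi.add_apply] at this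
      rw [haa, hbb]
      nlinarith
    set τ : ℝ := if b = 0 then 0 else a / b with hτ
    have hτ0 : 0 ≤ τ := by
      rw [hτ]; split
      · exact le_refl 0
      · exact div_nonneg ha (ha.trans hab)
    have hτ1 : τ ≤ 1 := by
      rw [hτ]; split
      · norm_num
      · rename_i h
        exact (div_le_one (lt_of_le_of_ne (ha.trans hab) (Ne.symm h))).2 hab
    have hτb : τ * b = a := by
      rw [hτ]; split
      · rename_i h
        rw [h] at hab
        nlinarith
      · rename_i h
        field_simp
    have huS : u ∈ coneHull S := mem_coneHull
      (fun v hv => hts (Finset.filter_subset _ t hv)) hc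
    have hwS' : w ∈ coneHull {s | s ∈ S ∧ 0 < ε * s k} := mem_coneHull
      (fun v hv => ⟨hts (Finset.filter_subset _ t (Finset.mem_coe.1 hv)),
        (Finset.mem_filter.1 (Finset.mem_coe.1 hv)).2⟩) hc
    have hwS : w ∈ coneHull S := coneHull_mono (fun s hs => hs.1) hwS'
    refine ⟨lam + (u + τ • w),
      ⟨⟨u + τ • w, add_mem_coneHull huS (smul_mem_coneHull hτ0 hwS), rfl⟩, ?_⟩,
      (1 - τ) • w, smul_mem_coneHull (by linarith) hwS', ?_⟩
    · -- (lam + (u + τ • w)) k = 0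
      show (lam + (u + τ • w)) k = 0
      have hzk : ε * (lam + (u + τ • w)) k = 0 := by
        simp only [Pi.add_apply, Pi.smul_apply, smul_eq_mul]
        rw [haa, hbb] at hτb
        linear_combination hτb
      exact (mul_eq_zero.1 hzk).resolve_left hεne
    · -- sums to x
      rw [← hsplit]
      show lam + (u + τ • w) + (1 - τ) • w = lam + (w + u)
      module
  · rintro x ⟨z, ⟨⟨uu, huu, rfl⟩, hzk⟩, ww, hww, rfl⟩
    constructor
    · refine ⟨uu + ww, add_mem_coneHull huu (coneHull_mono (fun s hs => hs.1) hww), ?_⟩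
      simp [add_assoc]
    · show 0 ≤ ε * (lam + uu + ww) k
      have h0 : (lam + uu) k = 0 := hzk
      simp only [Pi.add_apply] at h0 ⊢
      rw [h0, zero_add]
      exact coneHull_k_nonneg hww
end ClusterDom
end

section
/- If B = [b_ij] is a bipartite exchange matrix (there is a partition {1,…,n} = P ∪ N such that b_ij > 0 implies i ∈ P and j ∈ N), then B is salient: the set of nonnegative linear combinations of the columns of B contains no line; equivalently, there is no nonzero vector v with both v and −v in the nonnegative linear span of the columns of B. -/
open Matrix

namespace ClusterDom

variable {ι ρ : Type*} [Fintype ι] [DecidableEq ι] [DecidableEq ρ]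

/-- A bipartite exchange matrix is salient: the nonnegative linear span
of its columns contains no line. -/
theorem statement17 {n : ℕ} (B : Matrix (Fin n) (Fin n) ℤ)
    (hskew : SkewSymmetrizable B)
    (P N : Finset (Fin n)) (hPN : P ∪ N = Finset.univ) (hdisj : Disjoint P N)
    (hbip : ∀ i j, 0 < B i j → i ∈ P ∧ j ∈ N) :
    ∀ v : Fin n → ℝ,
      (∃ α : Fin n → ℝ, (∀ j, 0 ≤ α j) ∧ v = (B.map ((↑) : ℤ → ℝ)).mulVec α) →
      (∃ α : Fin n → ℝ, (∀ j, 0 ≤ α j) ∧ -v = (B.map ((↑) : ℤ → ℝ)).mulVec α) →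
      v = 0 := by
  rintro v ⟨α, hα, hv⟩ ⟨β, hβ, hnv⟩
  obtain ⟨d, hd, hsk⟩ := hskew
  have hP : ∀ i ∈ P, ∀ j, 0 ≤ B i j := by
    intro i hi j
    by_contra h
    push_neg at h
    have h1 : d i * B i j < 0 := mul_neg_of_pos_of_neg (hd i) h
    rw [hsk i j] at h1
    have h2 : 0 < B j i := by nlinarith [hd j]
    exact (Finset.disjoint_left.mp hdisj hi) (hbip j i h2).2
  have hN : ∀ i ∈ N, ∀ j, B i j ≤ 0 := by
    intro i hi j
    by_contra h
    push_neg at h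
    exact (Finset.disjoint_left.mp hdisj (hbip i j h).1) hi
  funext i
  have hiu : i ∈ P ∪ N := by rw [hPN]; exact Finset.mem_univ i
  have hvi : v i = ∑ j, (B i j : ℝ) * α j := by
    rw [hv]; simp [Matrix.mulVec, dotProduct, Matrix.map_apply]
  have hnvi : -(v i) = ∑ j, (B i j : ℝ) * β j := by
    have := congrFun hnv i
    simp only [Pi.neg_apply] at this
    rw [this]; simp [Matrix.mulVec, dotProduct, Matrix.map_apply]
  rcases Finset.mem_union.mp hiu with hi | hi
  · have h1 : 0 ≤ v i := by
      rw [hvi]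
      exact Finset.sum_nonneg fun j _ =>
        mul_nonneg (by exact_mod_cast hP i hi j) (hα j)
    have h2 : 0 ≤ -(v i) := by
      rw [hnvi]
      exact Finset.sum_nonneg fun j _ =>
        mul_nonneg (by exact_mod_cast hP i hi j) (hβ j)
    have : v i = 0 := le_antisymm (by linarith) h1
    simpa using this
  · have h1 : v i ≤ 0 := by
      rw [hvi]
      exact Finset.sum_nonpos fun j _ =>
        mul_nonpos_of_nonpos_of_nonneg (by exact_mod_cast hN i hi j) (hα j)
    have h2 : -(v i) ≤ 0 := by
      rw [hnvi]
      exact Finset.sum_nonpos fun j _ =>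
        mul_nonpos_of_nonpos_of_nonneg (by exact_mod_cast hN i hi j) (hβ j)
    have : v i = 0 := le_antisymm h1 (by linarith)
    simpa using this

end ClusterDom
end

section
/- With notation as in the context (B₀ an acyclic exchange matrix of affine type indexed so that b_ij ≥ 0 for i < j, c the Coxeter element acting on ℝ^n, δ the primitive positive integer vector spanning the kernel of the Cartan companion A, and ω_c(x, y) = xᵀ·D·B₀·y): let TravProj(c) := { e_1, s_1(e_2), s_1(s_2(e_3)), …, s_1(s_2(⋯(s_{n−1}(e_n))⋯)) } ⊂ ℝ^n, where e_1, …, e_n is the standard basis. If β = c^p(γ) for some γ ∈ TravProj(c) and some integer p ≥ 0, then ω_c(β, δ) ≥ 0. -/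
open Matrix

namespace ClusterDom

variable {ι ρ : Type*} [Fintype ι] [DecidableEq ι] [DecidableEq ρ]

/-- The matrix (acting on simple-root coordinates) of the simple reflection `s_i`
associated to the Cartan matrix `A`: `(s_i v)_m = v_m − δ_{m i} · Σ_j a_{i j} v_j`. -/
noncomputable def reflM {n : ℕ} (A : Matrix (Fin n) (Fin n) ℤ) (i : Fin n) :
    Matrix (Fin n) (Fin n) ℝ :=
  Matrix.of fun m j =>
    (if m = j then (1 : ℝ) else 0) - (if m = i then ((A i j : ℤ) : ℝ) else 0)

/-- The matrix of the Coxeter element `c = s_1 s_2 ⋯ s_n` (so `c v = s_1(s_2(⋯(s_n v))))`. -/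
noncomputable def coxM {n : ℕ} (A : Matrix (Fin n) (Fin n) ℤ) : Matrix (Fin n) (Fin n) ℝ :=
  ((List.finRange n).map (reflM A)).prod

/-- The element `s_1 s_2 ⋯ s_{k−1} (e_k)` of `TravProj(c)` indexed by `k`. -/
noncomputable def travProj {n : ℕ} (A : Matrix (Fin n) (Fin n) ℤ) (k : Fin n) : Fin n → ℝ :=
  ((((List.finRange n).take k.1).map (reflM A)).prod).mulVec (Pi.single k 1)

/-- The bilinear form `ω_c(x, y) = xᵀ · D · B₀ · y`. -/
noncomputable def omegaForm {n : ℕ} (d : Fin n → ℤ) (B₀ : Matrix (Fin n) (Fin n) ℤ)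
    (x y : Fin n → ℝ) : ℝ :=
  ∑ i, ∑ j, x i * (((d i : ℤ) : ℝ) * ((B₀ i j : ℤ) : ℝ)) * y j

lemma vecMul_reflM {n : ℕ} (A : Matrix (Fin n) (Fin n) ℤ) (i : Fin n) (x : Fin n → ℝ)
    (j : Fin n) : (x ᵥ* reflM A i) j = x j - ((A i j : ℤ) : ℝ) * x i := by
  simp only [Matrix.vecMul, dotProduct, reflM, Matrix.of_apply, mul_sub,
    Finset.sum_sub_distrib, mul_ite, mul_one, mul_zero]
  rw [Finset.sum_ite_eq' Finset.univ j x, Finset.sum_ite_eq' Finset.univ i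
    (fun l => x l * ((A i j : ℤ) : ℝ))]
  simp [mul_comm]

section Key
variable {n : ℕ} (A : Matrix (Fin n) (Fin n) ℤ) (dr δr : Fin n → ℝ)

lemma val_at (hker : ∀ m, ∑ l, ((A m l : ℤ) : ℝ) * δr l = 0)
    (hsym : ∀ i j, dr i * ((A i j : ℤ) : ℝ) = dr j * ((A j i : ℤ) : ℝ))
    (hdiag : ∀ i, A i i = 2) (q : Fin n) :
    (dr q * δr q + ∑ l, if q < l then dr q * ((A q l : ℤ) : ℝ) * δr l else 0)
      + (∑ i, if i < q then ((A i q : ℤ) : ℝ) * (dr i * δr i) else 0)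
      = -(dr q * δr q) := by
  have h1 : ∀ i : Fin n, (if i < q then ((A i q : ℤ) : ℝ) * (dr i * δr i) else 0)
      = (if i < q then dr q * ((A q i : ℤ) : ℝ) * δr i else 0) := by
    intro i
    by_cases h : i < q
    · simp only [h, if_true]
      linear_combination δr i * hsym i q
    · simp [h]
  rw [Finset.sum_congr rfl (fun i _ => h1 i)]
  have h2 : ∀ i : Fin n, (if q < i then dr q * ((A q i : ℤ) : ℝ) * δr i else 0)
      + (if i < q then dr q * ((A q i : ℤ) : ℝ) * δr i else 0)
      = dr q * ((A q i : ℤ) : ℝ) * δr i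
        - (if i = q then dr q * ((A q i : ℤ) : ℝ) * δr i else 0) := by
    intro i
    rcases lt_trichotomy i q with h | h | h
    · simp [h, not_lt_of_gt h, ne_of_lt h]
    · simp [h]
    · simp [h, not_lt_of_gt h, (ne_of_lt h).symm]
  have h3 : (∑ l, if q < l then dr q * ((A q l : ℤ) : ℝ) * δr l else 0)
      + (∑ i, if i < q then dr q * ((A q i : ℤ) : ℝ) * δr i else 0)
      = (∑ l, dr q * ((A q l : ℤ) : ℝ) * δr l) - dr q * ((A q q : ℤ) : ℝ) * δr q := by
    rw [← Finset.sum_add_distrib, Finset.sum_congr rfl (fun i _ => h2 i),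
      Finset.sum_sub_distrib, Finset.sum_ite_eq' Finset.univ q]
    simp
  have h4 : (∑ l, dr q * ((A q l : ℤ) : ℝ) * δr l) = 0 := by
    rw [Finset.sum_congr rfl (fun l _ => mul_assoc (dr q) _ (δr l)), ← Finset.mul_sum,
      hker q, mul_zero]
  have h5 : ((A q q : ℤ) : ℝ) = 2 := by rw [hdiag q]; norm_num
  rw [h5] at h3
  linarith [h3, h4]

lemma key (hker : ∀ m, ∑ l, ((A m l : ℤ) : ℝ) * δr l = 0)
    (hsym : ∀ i j, dr i * ((A i j : ℤ) : ℝ) = dr j * ((A j i : ℤ) : ℝ))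
    (hdiag : ∀ i, A i i = 2) (v : Fin n → ℝ)
    (hv : ∀ j, v j = dr j * δr j + ∑ l, if j < l then dr j * ((A j l : ℤ) : ℝ) * δr l else 0) :
    ∀ m : ℕ, m ≤ n → ∀ j,
      (v ᵥ* ((((List.finRange n).take m).map (reflM A)).prod)) j
        = v j + ∑ i : Fin n, if (i : ℕ) < m then ((A i j : ℤ) : ℝ) * (dr i * δr i) else 0 := by
  intro m
  induction m with
  | zero => intro _ j; simp [Matrix.vecMul_one]
  | succ m ih =>
    intro hm j
    have hmn : m < n := hm
    have hq : (List.finRange n).take (m + 1)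
        = (List.finRange n).take m ++ [⟨m, hmn⟩] := by
      rw [List.take_succ]
      congr 1
      rw [List.getElem?_eq_getElem (by simpa using hmn)]
      simp
    set q : Fin n := ⟨m, hmn⟩ with hqdef
    rw [hq, List.map_append, List.prod_append, ← Matrix.vecMul_vecMul]
    simp only [List.map_cons, List.map_nil, List.prod_cons, List.prod_nil, mul_one]
    rw [vecMul_reflM, ih (le_of_lt hmn) j, ih (le_of_lt hmn) q]
    have hwm : v q + (∑ i : Fin n, if (i : ℕ) < m then ((A i q : ℤ) : ℝ) * (dr i * δr i) else 0)
        = -(dr q * δr q) := by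
      rw [hv q]
      have hcong : (∑ i : Fin n, if (i : ℕ) < m then ((A i q : ℤ) : ℝ) * (dr i * δr i) else 0)
          = ∑ i : Fin n, if i < q then ((A i q : ℤ) : ℝ) * (dr i * δr i) else 0 :=
        Finset.sum_congr rfl (fun i _ => by
          simp only [show ((i : ℕ) < m ↔ i < q) from Iff.rfl])
      rw [hcong]
      exact val_at A dr δr hker hsym hdiag q
    rw [hwm]
    have hsplit : ∀ i : Fin n,
        (if ((i : Fin n) : ℕ) < m + 1 then ((A i j : ℤ) : ℝ) * (dr i * δr i) else 0)
        = (if (i : ℕ) < m then ((A i j : ℤ) : ℝ) * (dr i * δr i) else 0)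
          + (if i = q then ((A i j : ℤ) : ℝ) * (dr i * δr i) else 0) := by
      intro i
      rcases lt_trichotomy (i : ℕ) m with h | h | h
      · have : i ≠ q := by
          intro e; rw [e] at h; exact lt_irrefl m h
        simp [h, Nat.lt_succ_of_lt h, this]
      · have : i = q := Fin.ext h
        simp [this, hqdef]
      · have h1 : ¬ (i : ℕ) < m + 1 := by omega
        have h2 : ¬ (i : ℕ) < m := by omega
        have : i ≠ q := by
          intro e; rw [e] at h; exact lt_irrefl m h
        simp [h1, h2, this]
    rw [Finset.sum_congr rfl (fun i _ => hsplit i), Finset.sum_add_distrib,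
      Finset.sum_ite_eq' Finset.univ q]
    simp only [Finset.mem_univ, if_true]
    ring

end Key

/-- For an acyclic exchange matrix `B₀` of affine type (indexed so that
`b_{ij} ≥ 0` for `i < j`), with `c` the Coxeter element and `δ` the primitive positive
integer vector spanning the kernel of the Cartan companion: if `β = c^p(γ)` with
`γ ∈ TravProj(c)` and `p ≥ 0`, then `ω_c(β, δ) ≥ 0`. -/
theorem statement19 {n : ℕ} (B₀ : Matrix (Fin n) (Fin n) ℤ) (d : Fin n → ℤ)
    (hd : ∀ i, 0 < d i) (hdskew : ∀ i j, d i * B₀ i j = -(d j * B₀ j i))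
    (hupper : ∀ i j : Fin n, i < j → 0 ≤ B₀ i j)
    (hconn : ∀ i j, Relation.ReflTransGen (fun a b => B₀ a b ≠ 0 ∨ B₀ b a ≠ 0) i j)
    (hpsd : ∀ x : Fin n → ℝ, 0 ≤ ∑ i, ∑ j, x i * ((d i * cartan B₀ i j : ℤ) : ℝ) * x j)
    (hrank : ((cartan B₀).map ((↑) : ℤ → ℝ)).rank = n - 1)
    (δ : Fin n → ℤ) (hδpos : ∀ i, 0 < δ i) (hδker : (cartan B₀).mulVec δ = 0)
    (hδprim : Finset.univ.gcd δ = 1)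
    (β : Fin n → ℝ) (p : ℕ) (k : Fin n)
    (hβ : β = ((coxM (cartan B₀)) ^ p).mulVec (travProj (cartan B₀) k)) :
    0 ≤ omegaForm d B₀ β (fun i => (δ i : ℝ)) := by
  set A : Matrix (Fin n) (Fin n) ℤ := cartan B₀ with hA
  set dr : Fin n → ℝ := fun i => ((d i : ℤ) : ℝ) with hdr
  set δr : Fin n → ℝ := fun i => ((δ i : ℤ) : ℝ) with hδr
  set v : Fin n → ℝ := fun j =>
    dr j * δr j + ∑ l, if j < l then dr j * ((A j l : ℤ) : ℝ) * δr l else 0 with hvdef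
  have hv : ∀ j, v j = dr j * δr j
      + ∑ l, if j < l then dr j * ((A j l : ℤ) : ℝ) * δr l else 0 := fun j => rfl
  have hdiag : ∀ i, A i i = 2 := by intro i; simp [hA, cartan]
  -- integer symmetry of D·A
  have hsymZ : ∀ i j, d i * A i j = d j * A j i := by
    intro i j
    by_cases h : i = j
    · subst h; ring
    · have h' : j ≠ i := fun e => h e.symm
      have : A i j = -|B₀ i j| := by simp [hA, cartan, h]
      rw [this, show A j i = -|B₀ j i| by simp [hA, cartan, h']]
      have h1 : d i * -|B₀ i j| = -|d i * B₀ i j| := by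
        rw [abs_mul, abs_of_pos (hd i)]; ring
      have h2 : d j * -|B₀ j i| = -|d j * B₀ j i| := by
        rw [abs_mul, abs_of_pos (hd j)]; ring
      rw [h1, h2, hdskew i j, abs_neg]
  have hsym : ∀ i j, dr i * ((A i j : ℤ) : ℝ) = dr j * ((A j i : ℤ) : ℝ) := by
    intro i j
    have := hsymZ i j
    simp only [hdr]
    exact_mod_cast congrArg (fun z : ℤ => (z : ℝ)) this
  have hker : ∀ m, ∑ l, ((A m l : ℤ) : ℝ) * δr l = 0 := by
    intro m
    have h := congrFun hδker m
    simp only [Matrix.mulVec, dotProduct, Pi.zero_apply] at h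
    have : ((∑ l, A m l * δ l : ℤ) : ℝ) = 0 := by rw [h]; norm_num
    push_cast at this
    simpa [hδr] using this
  -- v is fixed by right-multiplication by coxM
  have hfull : ∀ j, (v ᵥ* coxM A) j = v j := by
    intro j
    have hcox : coxM A = (((List.finRange n).take n).map (reflM A)).prod := by
      rw [show (List.finRange n).take n = List.finRange n from
        List.take_of_length_le (by simp)]
      rfl
    rw [hcox, key A dr δr hker hsym hdiag v hv n le_rfl j]
    have h6 : (∑ i : Fin n, if (i : ℕ) < n then ((A i j : ℤ) : ℝ) * (dr i * δr i) else 0)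
        = ∑ i : Fin n, dr j * (((A j i : ℤ) : ℝ) * δr i) := by
      apply Finset.sum_congr rfl
      intro i _
      rw [if_pos i.isLt]
      have := hsym i j
      linear_combination δr i * this
    rw [h6, ← Finset.mul_sum, hker j, mul_zero, add_zero]
  have hfix : v ᵥ* coxM A = v := funext hfull
  have hfixp : ∀ q : ℕ, v ᵥ* (coxM A) ^ q = v := by
    intro q
    induction q with
    | zero => simp [Matrix.vecMul_one]
    | succ q ih => rw [pow_succ, ← Matrix.vecMul_vecMul, ih, hfix]
  -- β ⬝ᵥ v = -(dr k * δr k)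
  have hγ : travProj A k ⬝ᵥ v = -(dr k * δr k) := by
    rw [dotProduct_comm, travProj, Matrix.dotProduct_mulVec,
      dotProduct_single, mul_one, key A dr δr hker hsym hdiag v hv k.1 k.isLt.le k]
    have hcong : (∑ i : Fin n, if (i : ℕ) < k.1 then ((A i k : ℤ) : ℝ) * (dr i * δr i) else 0)
        = ∑ i : Fin n, if i < k then ((A i k : ℤ) : ℝ) * (dr i * δr i) else 0 :=
      Finset.sum_congr rfl (fun i _ => by
        simp only [show ((i : ℕ) < k.1 ↔ i < k) from Iff.rfl])
    rw [hv k, hcong]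
    exact val_at A dr δr hker hsym hdiag k
  have hβv : β ⬝ᵥ v = -(dr k * δr k) := by
    rw [hβ, dotProduct_comm, Matrix.dotProduct_mulVec, hfixp p,
      ← dotProduct_comm, hγ]
  -- rewrite omegaForm as -2 * (β ⬝ᵥ v)
  have hrow : ∀ i, (∑ j, ((d i : ℤ) : ℝ) * ((B₀ i j : ℤ) : ℝ) * δr j) = -2 * v i := by
    intro i
    have hBA : ∀ j, (B₀ i j : ℤ) = (if j < i then A i j else 0) - (if i < j then A i j else 0) := by
      intro j
      rcases lt_trichotomy i j with h | h | h
      · have hne : i ≠ j := ne_of_lt h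
        have h0 : 0 ≤ B₀ i j := hupper i j h
        simp [hA, cartan, hne, not_lt_of_gt h, h, abs_of_nonneg h0]
      · subst h
        have : 2 * (d i * B₀ i i) = 0 := by linarith [hdskew i i]
        have hB0 : B₀ i i = 0 := by
          have hd' := hd i
          nlinarith [this]
        simp [hB0]
      · have hne : i ≠ j := (ne_of_lt h).symm
        have h0 : B₀ i j ≤ 0 := by
          have h1 : 0 ≤ B₀ j i := hupper j i h
          have h2 := hdskew i j
          nlinarith [hd i, hd j, mul_nonneg (le_of_lt (hd j)) h1]
        simp [hA, cartan, hne, h, not_lt_of_gt h, abs_of_nonpos h0]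
    have hterm : ∀ j, ((d i : ℤ) : ℝ) * ((B₀ i j : ℤ) : ℝ) * δr j
        = (if j < i then ((d i : ℤ) : ℝ) * ((A i j : ℤ) : ℝ) * δr j else 0)
          - (if i < j then ((d i : ℤ) : ℝ) * ((A i j : ℤ) : ℝ) * δr j else 0) := by
      intro j
      have := hBA j
      rcases lt_trichotomy i j with h | h | h
      · simp only [not_lt_of_gt h, if_false, h, if_true, zero_sub]
        rw [show (B₀ i j : ℤ) = -(A i j) by rw [this]; simp [h, not_lt_of_gt h]]
        push_cast; ring
      · subst h
        rw [show (B₀ i i : ℤ) = 0 by rw [this]; simp]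
        simp
      · simp only [not_lt_of_gt h, if_false, h, if_true, sub_zero]
        rw [show (B₀ i j : ℤ) = A i j by rw [this]; simp [h, not_lt_of_gt h]]
    rw [Finset.sum_congr rfl (fun j _ => hterm j), Finset.sum_sub_distrib]
    -- split full sum
    have hsplit : ∀ j : Fin n,
        (if j < i then ((d i : ℤ) : ℝ) * ((A i j : ℤ) : ℝ) * δr j else 0)
        = ((d i : ℤ) : ℝ) * ((A i j : ℤ) : ℝ) * δr j
          - (if j = i then ((d i : ℤ) : ℝ) * ((A i j : ℤ) : ℝ) * δr j else 0)
          - (if i < j then ((d i : ℤ) : ℝ) * ((A i j : ℤ) : ℝ) * δr j else 0) := by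
      intro j
      rcases lt_trichotomy j i with h | h | h
      · simp [h, not_lt_of_gt h, ne_of_lt h]
      · simp [h, lt_irrefl]
      · simp [h, not_lt_of_gt h, (ne_of_lt h).symm]
    rw [Finset.sum_congr rfl (fun j _ => hsplit j)]
    rw [Finset.sum_sub_distrib, Finset.sum_sub_distrib, Finset.sum_ite_eq' Finset.univ i]
    have hzero : (∑ j, ((d i : ℤ) : ℝ) * ((A i j : ℤ) : ℝ) * δr j) = 0 := by
      rw [Finset.sum_congr rfl (fun j _ => mul_assoc _ _ (δr j)), ← Finset.mul_sum, hker i,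
        mul_zero]
    have hAii : ((A i i : ℤ) : ℝ) = 2 := by rw [hdiag i]; norm_num
    rw [hzero]
    simp only [Finset.mem_univ, if_true, hAii, hv i]
    have : (∑ l, if i < l then dr i * ((A i l : ℤ) : ℝ) * δr l else 0)
        = ∑ j, if i < j then ((d i : ℤ) : ℝ) * ((A i j : ℤ) : ℝ) * δr j else 0 := rfl
    rw [← this]
    simp only [hdr, hδr]
    ring
  have homega : omegaForm d B₀ β δr = -2 * (β ⬝ᵥ v) := by
    have hrow' : ∀ i, (∑ j, β i * (((d i : ℤ) : ℝ) * ((B₀ i j : ℤ) : ℝ)) * δr j)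
        = β i * (-2 * v i) := by
      intro i
      rw [← hrow i, Finset.mul_sum]
      exact Finset.sum_congr rfl (fun j _ => by ring)
    rw [omegaForm, Finset.sum_congr rfl (fun i _ => hrow' i), dotProduct,
      Finset.mul_sum]
    exact Finset.sum_congr rfl (fun i _ => by ring)
  have : omegaForm d B₀ β δr = 2 * (dr k * δr k) := by
    rw [homega, hβv]; ring
  rw [this]
  have h1 : (0:ℝ) < dr k := by
    simp only [hdr]; exact_mod_cast hd k
  have h2 : (0:ℝ) < δr k := by
    simp only [hδr]; exact_mod_cast hδpos k
  positivity


end ClusterDom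
end
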